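/- Let M be a smooth manifold. For smooth sections (X,α), (Y,β) of TM ⊕ T*M, define the pairing ⟨(X,α),(Y,β)⟩ = β(X) + α(Y) and the Courant bracket [(X,α),(Y,β)] = ([X,Y], L_X β − i_Y dα). Then for all sections e₁ = (X,α), e₂ = (Y,β), e₃ = (Z,γ): X ⟨e₂,e₃⟩ = ⟨[e₁,e₂], e₃⟩ + ⟨e₂, [e₁,e₃]⟩. -/

import Mathlib

/- We work on the local model of a smooth manifold: an arbitrary real normed
space `E`.  Vector fields are maps `E → E`, one-forms are maps
`E → (E →L[ℝ] ℝ)`. -/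

variable {E : Type*} [NormedAddCommGroup E] [NormedSpace ℝ E]

/-- The Lie bracket `[X,Y]` of vector fields. -/
noncomputable def lieB (X Y : E → E) : E → E :=
  fun x => fderiv ℝ Y x (X x) - fderiv ℝ X x (Y x)

/-- The Lie derivative `L_X β` of a one-form `β` along a vector field `X`:
`(L_X β)_x v = (Dβ_x (X x)) v + β_x (DX_x v)`. -/
noncomputable def lieDerOneForm (X : E → E) (β : E → (E →L[ℝ] ℝ)) :
    E → (E →L[ℝ] ℝ) :=
  fun x => fderiv ℝ β x (X x) + (β x).comp (fderiv ℝ X x)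

/-- The interior product `i_Y dα` of the exterior differential of a one-form
`α` with a vector field `Y`:  `(i_Y dα)_x v = (Dα_x (Y x)) v − (Dα_x v) (Y x)`. -/
noncomputable def intDiff (Y : E → E) (α : E → (E →L[ℝ] ℝ)) :
    E → (E →L[ℝ] ℝ) :=
  fun x => fderiv ℝ α x (Y x) - (fderiv ℝ α x).flip (Y x)

/-- invariance of the pairing `⟨(Y,β),(Z,γ)⟩ = γ(Y) + β(Z)`
under the Courant bracket: for sections `e₁ = (X,α)`, `e₂ = (Y,β)`,
`e₃ = (Z,γ)` of `TM ⊕ T*M`,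
`X⟨e₂,e₃⟩ = ⟨[e₁,e₂], e₃⟩ + ⟨e₂, [e₁,e₃]⟩`. -/
theorem courant_bracket_pairing_invariance
    (X Y Z : E → E) (α β γ : E → (E →L[ℝ] ℝ))
    (hX : ContDiff ℝ (⊤ : ℕ∞) X) (hY : ContDiff ℝ (⊤ : ℕ∞) Y) (hZ : ContDiff ℝ (⊤ : ℕ∞) Z)
    (hα : ContDiff ℝ (⊤ : ℕ∞) α) (hβ : ContDiff ℝ (⊤ : ℕ∞) β) (hγ : ContDiff ℝ (⊤ : ℕ∞) γ) :
    ∀ x, fderiv ℝ (fun y => γ y (Y y) + β y (Z y)) x (X x)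
        = (γ x (lieB X Y x) + (lieDerOneForm X β x - intDiff Y α x) (Z x))
          + ((lieDerOneForm X γ x - intDiff Z α x) (Y x) + β x (lieB X Z x)) := by
  intro x
  have hγY : DifferentiableAt ℝ (fun y => γ y (Y y)) x := by
    exact (hγ.differentiable (by simp) x).clm_apply (hY.differentiable (by simp) x)
  have hβZ : DifferentiableAt ℝ (fun y => β y (Z y)) x := by
    exact (hβ.differentiable (by simp) x).clm_apply (hZ.differentiable (by simp) x)
  have h1 : fderiv ℝ (fun y => γ y (Y y) + β y (Z y)) x
      = fderiv ℝ (fun y => γ y (Y y)) x + fderiv ℝ (fun y => β y (Z y)) x :=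
    fderiv_fun_add hγY hβZ
  have h2 := fderiv_clm_apply (hγ.differentiable (by simp) x) (hY.differentiable (by simp) x)
  have h3 := fderiv_clm_apply (hβ.differentiable (by simp) x) (hZ.differentiable (by simp) x)
  simp only [h1, h2, h3, lieB, lieDerOneForm, intDiff, ContinuousLinearMap.add_apply,
    ContinuousLinearMap.sub_apply, ContinuousLinearMap.comp_apply,
    ContinuousLinearMap.flip_apply, map_sub, map_add]
  ring
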